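/- arXiv:1909.13600 — 2 statements merged into one kernel-verified Lean document; each statement's English description precedes it below -/
import Mathlib

section
/- (Case of Lemma 3: overflow on both sides.) Let Δ ≥ 0 and let L, U, ℓ ∈ ℝ with L < ℓ − Δ and ℓ + Δ < U. Then the symbolic loss, which in this case is the sum of the distances from the midpoints of the two overflowing intervals [L, ℓ − Δ] and [ℓ + Δ, U] to the tolerance interval, satisfies infDist((L + (ℓ − Δ))/2, Icc(ℓ − Δ, ℓ + Δ)) + infDist(((ℓ + Δ) + U)/2, Icc(ℓ − Δ, ℓ + Δ)) = (1/2)·(e_Δ(L, ℓ) + e_Δ(U, ℓ)). -/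
/-- Tolerance error between a prediction `p` and a label `ℓ` with tolerance `Δ`:
`0` if `|p - ℓ| ≤ Δ`, otherwise the minimum of the distances to the shifted labels. -/
noncomputable def tolErr (Δ p ℓ : ℝ) : ℝ :=
  if |p - ℓ| ≤ Δ then 0 else min |p - (ℓ - Δ)| |p - (ℓ + Δ)|

open Metric Set

namespace Real

variable {x a b : ℝ}

theorem infDist_Icc_of_le (hxa : x ≤ a) (hab : a ≤ b) : infDist x (Icc a b) = a - x := by
  refine le_antisymm ?_ ((le_infDist (nonempty_Icc.2 hab)).2 fun y hy => ?_)
  · calc infDist x (Icc a b) ≤ dist x a := infDist_le_dist_of_mem (left_mem_Icc.2 hab)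
      _ = a - x := by rw [dist_comm, Real.dist_eq, abs_of_nonneg (sub_nonneg.2 hxa)]
  · rw [dist_comm, Real.dist_eq, abs_of_nonneg (sub_nonneg.2 (hxa.trans hy.1))]
    linarith [hy.1]

theorem infDist_Icc_of_ge (hbx : b ≤ x) (hab : a ≤ b) : infDist x (Icc a b) = x - b := by
  refine le_antisymm ?_ ((le_infDist (nonempty_Icc.2 hab)).2 fun y hy => ?_)
  · calc infDist x (Icc a b) ≤ dist x b := infDist_le_dist_of_mem (right_mem_Icc.2 hab)
      _ = x - b := by rw [Real.dist_eq, abs_of_nonneg (sub_nonneg.2 hbx)]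
  · rw [Real.dist_eq, abs_of_nonneg (sub_nonneg.2 (hy.2.trans hbx))]
    linarith [hy.2]

end Real

section tolErr

variable {Δ p ℓ : ℝ}

theorem tolErr_of_lt_sub (hΔ : 0 ≤ Δ) (hp : p < ℓ - Δ) : tolErr Δ p ℓ = ℓ - Δ - p := by
  have hfar : ¬|p - ℓ| ≤ Δ := fun h => by linarith [neg_abs_le (p - ℓ)]
  rw [tolErr, if_neg hfar, abs_of_neg (by linarith), abs_of_neg (by linarith),
    min_eq_left (by linarith)]
  ring

theorem tolErr_of_add_lt (hΔ : 0 ≤ Δ) (hp : ℓ + Δ < p) : tolErr Δ p ℓ = p - (ℓ + Δ) := by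
  have hfar : ¬|p - ℓ| ≤ Δ := fun h => by linarith [le_abs_self (p - ℓ)]
  rw [tolErr, if_neg hfar, abs_of_pos (by linarith), abs_of_pos (by linarith),
    min_eq_right (by linarith)]

end tolErr

/-- Lemma 3, case: overflow on both sides. -/
theorem symbolic_loss_case_both_overflow (Δ L U ℓ : ℝ) (hΔ : 0 ≤ Δ)
    (h1 : L < ℓ - Δ) (h2 : ℓ + Δ < U) :
    Metric.infDist ((L + (ℓ - Δ)) / 2) (Set.Icc (ℓ - Δ) (ℓ + Δ)) +
        Metric.infDist (((ℓ + Δ) + U) / 2) (Set.Icc (ℓ - Δ) (ℓ + Δ)) =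
      (1 / 2) * (tolErr Δ L ℓ + tolErr Δ U ℓ) := by
  have hab : ℓ - Δ ≤ ℓ + Δ := by linarith
  rw [Real.infDist_Icc_of_le (by linarith) hab, Real.infDist_Icc_of_ge (by linarith) hab,
    tolErr_of_lt_sub hΔ h1, tolErr_of_add_lt hΔ h2]
  ring
end

section
/- (Case of Lemma 3: output bound entirely to the right of the tolerance interval.) Let Δ ≥ 0 and let L, U, ℓ ∈ ℝ with ℓ + Δ < L ≤ U. Then the symbolic loss, which in this case is the distance from the midpoint (L + U)/2 of the whole interval [L, U] to the tolerance interval, satisfies infDist((L + U)/2, Icc(ℓ − Δ, ℓ + Δ)) = (1/2)·(e_Δ(L, ℓ) + e_Δ(U, ℓ)). -/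
lemma Real.infDist_Icc_of_le_s11 {a b x : ℝ} (hab : a ≤ b) (hbx : b ≤ x) :
    Metric.infDist x (Set.Icc a b) = x - b := by
  have hb : b ∈ Set.Icc a b := Set.right_mem_Icc.2 hab
  have hdist : dist x b = x - b := by rw [Real.dist_eq, abs_of_nonneg (sub_nonneg.2 hbx)]
  refine le_antisymm (hdist ▸ Metric.infDist_le_dist_of_mem hb) ?_
  refine (Metric.le_infDist ⟨b, hb⟩).2 fun y hy => ?_
  rw [Real.dist_eq]
  exact (sub_le_sub_left hy.2 x).trans (le_abs_self _)

lemma tolErr_of_add_le {Δ p ℓ : ℝ} (hΔ : 0 ≤ Δ) (hp : ℓ + Δ ≤ p) :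
    tolErr Δ p ℓ = p - (ℓ + Δ) := by
  unfold tolErr
  split_ifs with hle
  · linarith [le_abs_self (p - ℓ)]
  · rw [abs_of_nonneg (by linarith), abs_of_nonneg (by linarith), min_eq_right (by linarith)]

/-- Lemma 3, case: output bound entirely to the right of the tolerance interval. -/
theorem symbolic_loss_case_all_right (Δ L U ℓ : ℝ) (hΔ : 0 ≤ Δ)
    (h1 : ℓ + Δ < L) (h2 : L ≤ U) :
    Metric.infDist ((L + U) / 2) (Set.Icc (ℓ - Δ) (ℓ + Δ)) =
      (1 / 2) * (tolErr Δ L ℓ + tolErr Δ U ℓ) := by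
  rw [Real.infDist_Icc_of_le_s11 (by linarith) (by linarith), tolErr_of_add_le hΔ h1.le,
    tolErr_of_add_le hΔ (by linarith)]
  ring
end
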